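/- arXiv:1907.09908 — 11 statements merged into one kernel-verified Lean document; each statement's English description precedes it below -/
import Mathlib

section
/- If n is a positive integer and n₀ is its radical (the product of the distinct prime divisors of n, i.e., the squarefree part), then φ̃(n₀) ≤ φ̃(n). -/
/-- φ̃(n): number of m with 1 ≤ m ≤ n, gcd(m,n)=1, m not prime. -/
def phiT (n : ℕ) : ℕ :=
  ((Finset.Icc 1 n).filter (fun m => Nat.gcd m n = 1 ∧ ¬ m.Prime)).card

/-- The product of the first k primes. -/
noncomputable def primorialN (k : ℕ) : ℕ := ∏ i ∈ Finset.range k, Nat.nth Nat.Prime i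

theorem Nat.Coprime.of_primeFactors_subset {m a b : ℕ} (hb : b ≠ 0)
    (hba : b.primeFactors ⊆ a.primeFactors) (hma : m.Coprime a) : m.Coprime b :=
  Nat.coprime_of_dvd fun _ hp hpm hpb =>
    hp.not_dvd_one <| hma ▸ Nat.dvd_gcd hpm
      (Nat.dvd_of_mem_primeFactors <| hba <| Nat.mem_primeFactors.mpr ⟨hp, hpb, hb⟩)

theorem phiT_le_of_le_of_primeFactors_subset {a b : ℕ} (hab : a ≤ b)
    (hba : b.primeFactors ⊆ a.primeFactors) : phiT a ≤ phiT b := by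
  obtain rfl | hb := eq_or_ne b 0
  · rw [Nat.le_zero.mp hab]
  refine Finset.card_le_card fun m hm => ?_
  simp only [Finset.mem_filter, Finset.mem_Icc] at hm ⊢
  obtain ⟨⟨hm1, hma⟩, hcop, hnp⟩ := hm
  exact ⟨⟨hm1, hma.trans hab⟩, Nat.Coprime.of_primeFactors_subset hb hba hcop, hnp⟩

theorem stmt2 (n : ℕ) (hn : 0 < n) :
    phiT (∏ p ∈ n.primeFactors, p) ≤ phiT n :=
  phiT_le_of_le_of_primeFactors_subset (Nat.le_of_dvd hn n.prod_primeFactors_dvd)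
    (Nat.primeFactors_prod_primeFactors n).ge
end

section
/- For all integers n ≥ 3 and k ≥ 1, φ̃(n^k) < φ̃(n^{k+1}). -/
theorem phiT_lt_phiT_of_coprime_iff {a b c : ℕ} (hab : ∀ m : ℕ, m.Coprime a ↔ m.Coprime b)
    (hac : a < c) (hcb : c ≤ b) (hc : c.Coprime b) (hc_prime : ¬ c.Prime) :
    phiT a < phiT b := by
  have hsub : (Finset.Icc 1 a).filter (fun m => Nat.gcd m a = 1 ∧ ¬ m.Prime) ⊆
      (Finset.Icc 1 b).filter (fun m => Nat.gcd m b = 1 ∧ ¬ m.Prime) := by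
    intro m hm
    simp only [Finset.mem_filter, Finset.mem_Icc] at hm ⊢
    exact ⟨⟨hm.1.1, by omega⟩, (hab m).1 hm.2.1, hm.2.2⟩
  refine Finset.card_lt_card ((Finset.ssubset_iff_of_subset hsub).2 ⟨c, ?_, ?_⟩)
  · simp only [Finset.mem_filter, Finset.mem_Icc]
    exact ⟨⟨by omega, hcb⟩, hc, hc_prime⟩
  · simp only [Finset.mem_filter, Finset.mem_Icc]
    omega

theorem stmt3 (n k : ℕ) (hn : 3 ≤ n) (hk : 1 ≤ k) :
    phiT (n ^ k) < phiT (n ^ (k + 1)) := by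
  have hpos : 1 ≤ n ^ k := Nat.one_le_pow _ _ (by omega)
  have hgrow : 3 * n ^ k ≤ n ^ (k + 1) := by
    rw [pow_succ, mul_comm]
    exact Nat.mul_le_mul_left _ hn
  refine phiT_lt_phiT_of_coprime_iff (c := n ^ (k + 1) - 1) (fun m => ?_) ?_ (by omega) ?_ ?_
  · rw [Nat.coprime_pow_right_iff (by omega), Nat.coprime_pow_right_iff (by omega)]
  · omega
  · exact (Nat.coprime_self_sub_left (by omega)).2 (Nat.coprime_one_left _)
  · intro hprime
    have hn_two := (Nat.prime_of_pow_sub_one_prime (by omega) hprime).1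
    omega
end

section
/- Let n be a positive integer and let p < q be primes with gcd(p, n) = 1. Then φ̃(np) ≤ φ̃(nq). -/
/-!
For `N ≠ 0` the totatives of `N` in `[1, N]` are the non-primes counted by `φ̃(N)` and the primes
`≤ N` not dividing `N`, so `φ̃(N) + π(N) = φ(N) + ω(N)`. With `a = φ(n)` and `p ∤ n`, the right
side is `a(p - 1) + ω(n) + 1` for `N = np` and at least `a(q - 1) + ω(n) + 1` for `N = nq`.
Every prime in `(np, nq]` exceeds `n`, hence is coprime to `n`, and this interval consists of
`q - p` blocks of `n` consecutive integers, each containing exactly `a` integers coprime to `n`;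
so `π(nq) ≤ π(np) + a(q - p)`, which closes the gap.
-/

open Finset
open scoped Nat.Prime

namespace Nat

theorem card_filter_coprime_Ico_add_mul (a k j : ℕ) :
    #{x ∈ Ico k (k + a * j) | a.Coprime x} = φ a * j := by
  induction j with
  | zero => simp
  | succ j ih =>
    have hsplit :
        Ico k (k + a * (j + 1)) = Ico k (k + a * j) ∪ Ico (k + a * j) (k + a * j + a) := by
      rw [Ico_union_Ico_eq_Ico (by omega) (by omega), mul_add_one, add_assoc]
    rw [hsplit, filter_union, card_union_of_disjoint
      (disjoint_filter_filter (Ico_disjoint_Ico_consecutive _ _ _)), ih,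
      filter_coprime_Ico_eq_totient, mul_add_one]

theorem primeCounting'_add_mul_le {a k : ℕ} (h0 : a ≠ 0) (h1 : a < k) (j : ℕ) :
    π' (k + a * j) ≤ π' k + φ a * j :=
  calc
    π' (k + a * j) ≤ #{p ∈ range k | p.Prime} + #{p ∈ Ico k (k + a * j) | p.Prime} := by
      rw [primeCounting', count_eq_card_filter_range, range_eq_Ico, range_eq_Ico,
        ← Ico_union_Ico_eq_Ico (zero_le k) le_self_add, filter_union]
      apply card_union_le
    _ ≤ π' k + #{x ∈ Ico k (k + a * j) | a.Coprime x} := by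
      rw [primeCounting', count_eq_card_filter_range]
      gcongr with p hp
      exact fun hpp => (coprime_of_lt_prime h0 (h1.trans_le (mem_Ico.1 hp).1) hpp).symm
    _ = π' k + φ a * j := by rw [card_filter_coprime_Ico_add_mul]

theorem primeCounting_mul_le {n a b : ℕ} (hn : 0 < n) (ha : 0 < a) (hab : a ≤ b) :
    π (n * b) ≤ π (n * a) + φ n * (b - a) := by
  have hk : n < n * a + 1 := Nat.lt_succ_of_le (Nat.le_mul_of_pos_right n ha)
  have hb : n * b + 1 = n * a + 1 + n * (b - a) := by
    rw [add_right_comm, ← Nat.mul_add, Nat.add_sub_cancel' hab]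
  simpa only [primeCounting, hb] using primeCounting'_add_mul_le hn.ne' hk (b - a)

theorem card_filter_gcd_eq_one_Icc (N : ℕ) : #{m ∈ Icc 1 N | m.gcd N = 1} = φ N := by
  rw [← filter_coprime_Ico_eq_totient N 1, add_comm, Ico_add_one_right_eq_Icc]
  simp only [Nat.coprime_comm, Nat.Coprime]

theorem card_filter_prime_add_card_primeFactors {N : ℕ} (hN : N ≠ 0) :
    #{m ∈ Icc 1 N | m.gcd N = 1 ∧ m.Prime} + #N.primeFactors = π N := by
  have hcoprime : {m ∈ Icc 1 N | m.gcd N = 1 ∧ m.Prime} = {p ∈ primesLE N | ¬ p ∣ N} := by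
    ext m
    simp only [mem_filter, mem_Icc, mem_primesLE]
    constructor
    · rintro ⟨⟨-, hmN⟩, hcop, hm⟩
      exact ⟨⟨hmN, hm⟩, (hm.coprime_iff_not_dvd).1 hcop⟩
    · rintro ⟨⟨hmN, hm⟩, hmd⟩
      exact ⟨⟨hm.one_le, hmN⟩, (hm.coprime_iff_not_dvd).2 hmd, hm⟩
  have hdvd : {p ∈ primesLE N | p ∣ N} = N.primeFactors := by
    ext m
    simp only [mem_filter, mem_primesLE, mem_primeFactors]
    constructor
    · rintro ⟨⟨-, hm⟩, hmd⟩
      exact ⟨hm, hmd, hN⟩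
    · rintro ⟨hm, hmd, -⟩
      exact ⟨⟨le_of_dvd (pos_of_ne_zero hN) hmd, hm⟩, hmd⟩
  rw [hcoprime, ← hdvd, add_comm, card_filter_add_card_filter_not,
    primesLE_card_eq_primeCounting]

theorem totient_mul_prime_add_card_primeFactors {n p : ℕ} (hn : n ≠ 0) (hp : p.Prime)
    (hpn : ¬ p ∣ n) :
    φ (n * p) + #(n * p).primeFactors = φ n * (p - 1) + #n.primeFactors + 1 := by
  have hcop : n.Coprime p := ((hp.coprime_iff_not_dvd).2 hpn).symm
  rw [totient_mul hcop, totient_prime hp, primeFactors_mul hn hp.ne_zero, hp.primeFactors,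
    union_singleton, card_insert_of_notMem (fun h => hpn (dvd_of_mem_primeFactors h)),
    add_assoc]

theorem le_totient_mul_prime_add_card_primeFactors {n q : ℕ} (hn : n ≠ 0) (hq : q.Prime) :
    φ n * (q - 1) + #n.primeFactors + 1 ≤ φ (n * q) + #(n * q).primeFactors := by
  by_cases hqn : q ∣ n
  · have hφ : 1 ≤ φ n := totient_pos.2 (pos_of_ne_zero hn)
    have hq1 : φ n * q = φ n * (q - 1) + φ n := by
      rw [← mul_add_one, Nat.sub_add_cancel hq.one_le]
    rw [mul_comm n q, totient_mul_of_prime_of_dvd hq hqn, mul_comm q n,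
      primeFactors_mul hn hq.ne_zero, hq.primeFactors, union_singleton,
      insert_eq_of_mem (mem_primeFactors.2 ⟨hq, hqn, hn⟩), mul_comm q, hq1]
    omega
  · exact (totient_mul_prime_add_card_primeFactors hn hq hqn).ge

end Nat

open Nat

theorem phiT_add_card_filter_prime (N : ℕ) :
    phiT N + #{m ∈ Icc 1 N | m.gcd N = 1 ∧ m.Prime} = φ N := by
  rw [← card_filter_gcd_eq_one_Icc, phiT, add_comm,
    ← card_filter_add_card_filter_not (s := {m ∈ Icc 1 N | m.gcd N = 1}) Nat.Prime,
    filter_filter, filter_filter]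

theorem phiT_add_primeCounting {N : ℕ} (hN : N ≠ 0) :
    phiT N + π N = φ N + #N.primeFactors := by
  have := phiT_add_card_filter_prime N
  have := card_filter_prime_add_card_primeFactors hN
  omega

theorem stmt4 (n p q : ℕ) (hn : 0 < n) (hp : p.Prime) (hq : q.Prime)
    (hpq : p < q) (hcop : Nat.gcd p n = 1) : phiT (n * p) ≤ phiT (n * q) := by
  have hpn : ¬ p ∣ n := (hp.coprime_iff_not_dvd).1 hcop
  have hP := phiT_add_primeCounting (mul_ne_zero hn.ne' hp.ne_zero)
  have hQ := phiT_add_primeCounting (mul_ne_zero hn.ne' hq.ne_zero)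
  have hPφ := totient_mul_prime_add_card_primeFactors hn.ne' hp hpn
  have hQφ := le_totient_mul_prime_add_card_primeFactors hn.ne' hq
  have hπ := primeCounting_mul_le hn hp.pos hpq.le
  have hsplit : φ n * (q - 1) = φ n * (p - 1) + φ n * (q - p) := by
    rw [← Nat.mul_add]
    congr 1
    have := hp.one_le
    omega
  omega
end

section
/- If a is a positive integer with exactly i distinct prime factors, and N_i = p_1 p_2 ⋯ p_i is the product of the first i primes, then φ̃(N_i) ≤ φ̃(a). -/
/-!
Let `F(S, x)` count the non-primes `m ≤ x` divisible by no prime of `S`, so that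
`φ̃(n) = F(primeFactors n, n)`. For a prime `r ∉ S`, the non-primes avoiding `S` that are multiples
of `r` are the `r t` with `2 ≤ t ≤ x / r` and `t` avoiding `S`; hence `F(S ∪ {r}, x)` is `F(S, x)`
minus a quantity that decreases in `r`, and exchanging a prime of a set for a larger one cannot
decrease `F`. If `i` primes `Q` differ from the set `P` of the first `i` primes, swapping a prime of
`Q \ P` for a smaller one of `P \ Q` lowers the sum of `Q`, so finitely many exchanges lead from `P`
to the prime factors of `a`; the same exchanges give
`N_i = ∏ P ≤ ∏_{p ∣ a} p ≤ a`. Therefore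
`φ̃(N_i) = F(P, N_i) ≤ F(P, a) ≤ F(primeFactors a, a) = φ̃(a)`.
-/

open Finset Nat

def nonprimesAvoiding (S : Finset ℕ) (x : ℕ) : Finset ℕ :=
  {m ∈ Icc 1 x | (∀ p ∈ S, ¬ p ∣ m) ∧ ¬ m.Prime}

lemma coprime_iff_forall_mem_primeFactors_not_dvd {m n : ℕ} (hn : n ≠ 0) :
    m.Coprime n ↔ ∀ p ∈ n.primeFactors, ¬ p ∣ m := by
  rw [← not_iff_not, Prime.not_coprime_iff_dvd]
  simp only [mem_primeFactors, not_forall, not_not, exists_prop]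
  exact ⟨fun ⟨p, hp, hpm, hpn⟩ => ⟨p, ⟨hp, hpn, hn⟩, hpm⟩,
    fun ⟨p, ⟨hp, hpn, _⟩, hpm⟩ => ⟨p, hp, hpm, hpn⟩⟩

lemma phiT_eq_card_nonprimesAvoiding {n : ℕ} (hn : n ≠ 0) :
    phiT n = #(nonprimesAvoiding n.primeFactors n) := by
  unfold phiT nonprimesAvoiding
  congr 1
  refine filter_congr fun m _ => ?_
  rw [← coprime_iff_gcd_eq_one, coprime_iff_forall_mem_primeFactors_not_dvd hn]

lemma nonprimesAvoiding_mono (S : Finset ℕ) {x y : ℕ} (h : x ≤ y) :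
    nonprimesAvoiding S x ⊆ nonprimesAvoiding S y :=
  filter_subset_filter _ (Icc_subset_Icc_right h)

lemma card_filter_dvd_nonprimesAvoiding {S : Finset ℕ} (hS : ∀ s ∈ S, s.Prime) {r : ℕ}
    (hr : r.Prime) (hrS : r ∉ S) (x : ℕ) :
    #{m ∈ nonprimesAvoiding S x | r ∣ m} = #{t ∈ Icc 2 (x / r) | ∀ s ∈ S, ¬ s ∣ t} := by
  refine card_nbij' (· / r) (r * ·) ?_ ?_ ?_ ?_
  · intro m hm
    simp only [nonprimesAvoiding, coe_filter, mem_filter, mem_Icc, Set.mem_ofPred_eq] at hm ⊢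
    obtain ⟨⟨⟨hm1, hmx⟩, hmS, hmp⟩, t, rfl⟩ := hm
    rw [Nat.mul_div_cancel_left t hr.pos]
    have ht0 : t ≠ 0 := by rintro rfl; omega
    have ht1 : t ≠ 1 := by rintro rfl; exact hmp (by simpa using hr)
    refine ⟨⟨by omega, (Nat.le_div_iff_mul_le hr.pos).mpr (by linarith [mul_comm r t])⟩, ?_⟩
    exact fun s hs hst => hmS s hs (hst.mul_left r)
  · intro t ht
    simp only [nonprimesAvoiding, coe_filter, mem_filter, mem_Icc, Set.mem_ofPred_eq] at ht ⊢
    obtain ⟨⟨ht2, htx⟩, htS⟩ := ht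
    have hrt : r * t ≤ x := by linarith [(Nat.le_div_iff_mul_le hr.pos).mp htx, mul_comm r t]
    refine ⟨⟨⟨by nlinarith [hr.two_le], hrt⟩, fun s hs hsd => ?_,
      Nat.not_prime_mul hr.ne_one (by omega)⟩, dvd_mul_right r t⟩
    rcases (hS s hs).dvd_mul.mp hsd with h | h
    · exact hrS (((prime_dvd_prime_iff_eq (hS s hs) hr).mp h) ▸ hs)
    · exact htS s hs h
  · exact fun m hm => Nat.mul_div_cancel' (mem_filter.mp hm).2
  · exact fun t _ => Nat.mul_div_cancel_left t hr.pos

lemma card_nonprimesAvoiding_insert_le {S : Finset ℕ} (hS : ∀ s ∈ S, s.Prime) {p q : ℕ}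
    (hp : p.Prime) (hq : q.Prime) (hpq : p ≤ q) (hpS : p ∉ S) (hqS : q ∉ S) (x : ℕ) :
    #(nonprimesAvoiding (insert p S) x) ≤ #(nonprimesAvoiding (insert q S) x) := by
  have hinsert : ∀ r,
      nonprimesAvoiding (insert r S) x = {m ∈ nonprimesAvoiding S x | ¬ r ∣ m} := by
    intro r
    rw [nonprimesAvoiding, nonprimesAvoiding, filter_filter]
    refine filter_congr fun m _ => ?_
    simp only [forall_mem_insert]
    tauto
  have hsplit := fun r => card_filter_add_card_filter_not (s := nonprimesAvoiding S x) (r ∣ ·)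
  have hmultiples : #{t ∈ Icc 2 (x / q) | ∀ s ∈ S, ¬ s ∣ t}
      ≤ #{t ∈ Icc 2 (x / p) | ∀ s ∈ S, ¬ s ∣ t} :=
    card_le_card (filter_subset_filter _ (Icc_subset_Icc_right (Nat.div_le_div_left hpq hp.pos)))
  rw [← card_filter_dvd_nonprimesAvoiding hS hp hpS,
    ← card_filter_dvd_nonprimesAvoiding hS hq hqS] at hmultiples
  rw [hinsert p, hinsert q]
  linarith [hsplit p, hsplit q]

theorem le_of_card_eq_card_primesBelow {α : Type*} [Preorder α] {f : Finset ℕ → α}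
    (hf : ∀ S p q, (∀ s ∈ S, s.Prime) → p.Prime → q.Prime → p < q → p ∉ S → q ∉ S →
      f (insert p S) ≤ f (insert q S))
    (n : ℕ) {Q : Finset ℕ} (hQ : ∀ q ∈ Q, q.Prime) (hcard : #Q = #(primesBelow n)) :
    f (primesBelow n) ≤ f Q := by
  induction hsum : ∑ q ∈ Q, q using Nat.strong_induction_on generalizing Q with
  | _ s ih =>
  by_cases hQP : Q ⊆ primesBelow n
  · rw [eq_of_subset_of_card_le hQP hcard.ge]
  obtain ⟨q, hqQ, hqP⟩ := not_subset.mp hQP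
  have hPQ : ¬ primesBelow n ⊆ Q := fun h => hqP (eq_of_subset_of_card_le h hcard.le ▸ hqQ)
  obtain ⟨p, hpP, hpQ⟩ := not_subset.mp hPQ
  have hpq : p < q := (lt_of_mem_primesBelow hpP).trans_le
    (not_lt.mp fun h => hqP (mem_primesBelow.mpr ⟨h, hQ q hqQ⟩))
  have hS : ∀ s ∈ Q.erase q, s.Prime := fun s hs => hQ s (mem_of_mem_erase hs)
  have hpS : p ∉ Q.erase q := fun h => hpQ (mem_of_mem_erase h)
  have hsum_lt : ∑ r ∈ insert p (Q.erase q), r < s := by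
    rw [sum_insert hpS, ← hsum, ← add_sum_erase Q _ hqQ]
    omega
  have hcard' : #(insert p (Q.erase q)) = #(primesBelow n) := by
    rw [card_insert_of_notMem hpS, card_erase_of_mem hqQ, hcard]
    have := card_pos.mpr ⟨p, hpP⟩
    omega
  calc f (primesBelow n) ≤ f (insert p (Q.erase q)) :=
        ih _ hsum_lt (forall_mem_insert _ _ _ |>.mpr ⟨prime_of_mem_primesBelow hpP, hS⟩)
          hcard' rfl
    _ ≤ f (insert q (Q.erase q)) :=
        hf _ p q hS (prime_of_mem_primesBelow hpP) (hQ q hqQ) hpq hpS (notMem_erase q Q)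
    _ = f Q := by rw [insert_erase hqQ]

lemma image_nth_prime_range (k : ℕ) :
    (range k).image (nth Nat.Prime) = primesBelow (nth Nat.Prime k) := by
  ext p
  simp only [mem_image, mem_range, mem_primesBelow]
  constructor
  · rintro ⟨t, ht, rfl⟩
    exact ⟨nth_strictMono infinite_setOfPred_prime ht, prime_nth_prime t⟩
  · rintro ⟨hpk, hp⟩
    refine ⟨count Nat.Prime p, ?_, nth_count hp⟩
    rw [← nth_count hp] at hpk
    exact (nth_strictMono infinite_setOfPred_prime).lt_iff_lt.mp hpk

lemma primorialN_eq_prod_primesBelow (k : ℕ) :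
    primorialN k = ∏ p ∈ primesBelow (nth Nat.Prime k), p := by
  rw [← image_nth_prime_range,
    prod_image fun _ _ _ _ h => nth_injective infinite_setOfPred_prime h]
  rfl

lemma primorialN_ne_zero (k : ℕ) : primorialN k ≠ 0 := by
  rw [primorialN_eq_prod_primesBelow]
  exact prod_ne_zero_iff.mpr fun p hp => (prime_of_mem_primesBelow hp).ne_zero

lemma primeFactors_primorialN (k : ℕ) :
    (primorialN k).primeFactors = primesBelow (nth Nat.Prime k) := by
  rw [primorialN_eq_prod_primesBelow, primeFactors_prod fun _ => prime_of_mem_primesBelow]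

theorem stmt5 (a i : ℕ) (ha : 0 < a) (hω : a.primeFactors.card = i) :
    phiT (primorialN i) ≤ phiT a := by
  set P := primesBelow (nth Nat.Prime i)
  have hprimes : ∀ q ∈ a.primeFactors, q.Prime := fun q => prime_of_mem_primeFactors
  have hcard : #a.primeFactors = #P := by
    rw [hω, primesBelow_card_eq_primeCounting', primeCounting'_nth_eq]
  have hle : primorialN i ≤ a := calc
    primorialN i = ∏ p ∈ P, p := primorialN_eq_prod_primesBelow i
    _ ≤ ∏ p ∈ a.primeFactors, p :=
        le_of_card_eq_card_primesBelow (f := fun S => ∏ p ∈ S, p)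
        (fun S p q _ _ _ hpq hpS hqS => by
          rw [prod_insert hpS, prod_insert hqS]; exact Nat.mul_le_mul_right _ hpq.le)
        _ hprimes hcard
    _ ≤ a := Nat.le_of_dvd ha (prod_primeFactors_dvd a)
  rw [phiT_eq_card_nonprimesAvoiding (primorialN_ne_zero i), primeFactors_primorialN,
    phiT_eq_card_nonprimesAvoiding ha.ne']
  calc #(nonprimesAvoiding P (primorialN i)) ≤ #(nonprimesAvoiding P a) :=
        card_le_card (nonprimesAvoiding_mono P hle)
    _ ≤ #(nonprimesAvoiding a.primeFactors a) :=
        le_of_card_eq_card_primesBelow (f := fun S => #(nonprimesAvoiding S a))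
        (fun _ _ _ hS hp hq hpq hpS hqS =>
          card_nonprimesAvoiding_insert_le hS hp hq hpq.le hpS hqS a)
        _ hprimes hcard
end

section
/- φ̃(n) = 1 if and only if n ∈ {1, 2, 3, 4, 6, 8, 12, 18, 24, 30}. -/
open Nat

theorem nth_prime_succ_le_two_mul (k : ℕ) : nth Nat.Prime (k + 1) ≤ 2 * nth Nat.Prime k := by
  obtain ⟨r, hr, hkr, hr2⟩ :=
    exists_prime_lt_and_le_two_mul (nth Nat.Prime k) (prime_nth_prime k).ne_zero
  by_contra! h
  exact hkr.not_ge (le_nth_of_lt_nth_succ (hr2.trans_lt h) hr)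

theorem sq_nth_prime_le_primorialN {k : ℕ} (hk : 4 ≤ k) :
    nth Nat.Prime k ^ 2 ≤ primorialN k := by
  induction k, hk using Nat.le_induction with
  | base => simp [primorialN, Finset.prod_range_succ]
  | succ k hk ih =>
    set p := nth Nat.Prime k
    have hp : 4 ≤ p := by have := add_two_le_nth_prime k; omega
    calc nth Nat.Prime (k + 1) ^ 2 ≤ (2 * p) ^ 2 := by gcongr; exact nth_prime_succ_le_two_mul k
      _ = 4 * p ^ 2 := by ring
      _ ≤ primorialN k * p := by nlinarith
      _ = primorialN (k + 1) := (Finset.prod_range_succ _ _).symm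

theorem primorialN_dvd {k n : ℕ} (h : ∀ i < k, nth Nat.Prime i ∣ n) : primorialN k ∣ n := by
  have hdvd : ∏ p ∈ (Finset.range k).image (nth Nat.Prime), p ∣ n := by
    refine Finset.prod_primes_dvd n ?_ ?_ <;> simp only [Finset.mem_image, Finset.mem_range]
    · rintro _ ⟨i, -, rfl⟩
      exact (prime_nth_prime i).prime
    · rintro _ ⟨i, hi, rfl⟩
      exact h i hi
  rwa [Finset.prod_image fun i _ j _ hij => nth_injective infinite_setOfPred_prime hij] at hdvd

theorem exists_prime_not_dvd_sq_le {n : ℕ} (hn : 49 ≤ n) :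
    ∃ p, p.Prime ∧ ¬ p ∣ n ∧ p ^ 2 ≤ n := by
  classical
  have hex : ∃ k, ¬ nth Nat.Prime k ∣ n :=
    ⟨n, fun h => (Nat.le_of_dvd (by omega) h).not_gt
      (by have := add_two_le_nth_prime n; omega)⟩
  set k := Nat.find hex
  refine ⟨nth Nat.Prime k, prime_nth_prime k, Nat.find_spec hex, ?_⟩
  rcases lt_or_ge k 4 with hk | hk
  · calc nth Nat.Prime k ^ 2 ≤ nth Nat.Prime 3 ^ 2 := by
          gcongr; exact nth_monotone infinite_setOfPred_prime (by omega)
      _ ≤ n := by simpa using hn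
  · calc nth Nat.Prime k ^ 2 ≤ primorialN k := sq_nth_prime_le_primorialN hk
      _ ≤ n := Nat.le_of_dvd (by omega) <|
          primorialN_dvd fun i hi => not_not.mp (Nat.find_min hex hi)

theorem one_lt_phiT {n m : ℕ} (hm : 1 < m) (hmn : m ≤ n) (hcop : Nat.gcd m n = 1)
    (hnp : ¬ m.Prime) : 1 < phiT n := by
  rw [phiT, Finset.one_lt_card]
  refine ⟨1, ?_, m, ?_, hm.ne⟩ <;> simp only [Finset.mem_filter, Finset.mem_Icc]
  · exact ⟨⟨le_rfl, by omega⟩, Nat.gcd_one_left n, not_prime_one⟩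
  · exact ⟨⟨by omega, hmn⟩, hcop, hnp⟩

theorem phiT_ne_one_of_le {n : ℕ} (hn : 49 ≤ n) : phiT n ≠ 1 := by
  obtain ⟨p, hp, hpn, hle⟩ := exists_prime_not_dvd_sq_le hn
  have hcop : Nat.gcd (p ^ 2) n = 1 := (hp.coprime_iff_not_dvd.mpr hpn).pow_left 2
  exact (one_lt_phiT (one_lt_pow two_ne_zero hp.one_lt) hle hcop
    (Nat.Prime.not_prime_pow le_rfl)).ne'

theorem phiT_eq_one_iff_of_lt_49 : ∀ n < 49,
    phiT n = 1 ↔ n ∈ ({1, 2, 3, 4, 6, 8, 12, 18, 24, 30} : Finset ℕ) := by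
  decide

theorem stmt6_general (n : ℕ) :
    phiT n = 1 ↔ n ∈ ({1, 2, 3, 4, 6, 8, 12, 18, 24, 30} : Finset ℕ) := by
  rcases lt_or_ge n 49 with hn | hn
  · exact phiT_eq_one_iff_of_lt_49 n hn
  · refine iff_of_false (phiT_ne_one_of_le hn) ?_
    simp only [Finset.mem_insert, Finset.mem_singleton]
    omega

theorem stmt6 (n : ℕ) (hn : 0 < n) :
    phiT n = 1 ↔ n ∈ ({1, 2, 3, 4, 6, 8, 12, 18, 24, 30} : Finset ℕ) :=
  stmt6_general n
end

section
/- For every m ≥ 31, φ̃(m) > 1; that is, there exists a composite number c with 1 < c ≤ m coprime to m, in addition to 1. -/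
/-- Product of primes strictly below p. -/
def Wprod (p : ℕ) : ℕ := ∏ q ∈ (Finset.range p).filter Nat.Prime, q

lemma bonse : ∀ p : ℕ, p.Prime → 11 ≤ p → p ^ 2 ≤ Wprod p := by
  intro p
  induction p using Nat.strong_induction_on with
  | _ p ih =>
    intro hp hp11
    -- r := largest prime < p
    set S := (Finset.range p).filter Nat.Prime with hS
    have h7S : 7 ∈ S := by
      simp only [hS, Finset.mem_filter, Finset.mem_range]
      exact ⟨by omega, by norm_num⟩
    have hne : S.Nonempty := ⟨7, h7S⟩
    obtain ⟨r, hrdef⟩ : ∃ r, r = S.max' hne := ⟨_, rfl⟩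
    have hrS : r ∈ S := hrdef ▸ S.max'_mem hne
    have hrprime : r.Prime := (Finset.mem_filter.1 hrS).2
    have hrlt : r < p := Finset.mem_range.1 (Finset.mem_filter.1 hrS).1
    have hr7 : 7 ≤ r := hrdef ▸ S.le_max' 7 h7S
    have hmax : ∀ q, q.Prime → q < p → q ≤ r := by
      intro q hq hqp
      exact hrdef ▸ S.le_max' q (Finset.mem_filter.2 ⟨Finset.mem_range.2 hqp, hq⟩)
    -- Bertrand: p ≤ 2 * r
    obtain ⟨s, hs, hrs, hs2r⟩ := Nat.exists_prime_lt_and_le_two_mul r (by omega)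
    have hp2r : p ≤ 2 * r := by
      by_contra h
      push_neg at h
      have : s < p := lt_of_le_of_lt hs2r h
      have := hmax s hs this
      omega
    -- Wprod p = r * Wprod r
    have hsplit : Wprod p = r * Wprod r := by
      have hset : (Finset.range p).filter Nat.Prime
          = insert r ((Finset.range r).filter Nat.Prime) := by
        ext q
        simp only [Finset.mem_insert, Finset.mem_filter, Finset.mem_range]
        constructor
        · rintro ⟨hq1, hq2⟩
          rcases lt_trichotomy q r with h | h | h
          · exact Or.inr ⟨h, hq2⟩
          · exact Or.inl h
          · exact absurd (hmax q hq2 hq1) (by omega)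
        · rintro (rfl | ⟨h1, h2⟩)
          · exact ⟨hrlt, hrprime⟩
          · exact ⟨by omega, h2⟩
      rw [Wprod, hset, Finset.prod_insert (by simp)]
      rfl
    by_cases hr11 : 11 ≤ r
    · have hWr := ih r hrlt hrprime hr11
      have : r ^ 3 ≤ Wprod p := by
        rw [hsplit]
        calc r ^ 3 = r * r ^ 2 := by ring
        _ ≤ r * Wprod r := Nat.mul_le_mul_left r hWr
      calc p ^ 2 ≤ (2 * r) ^ 2 := Nat.pow_le_pow_left hp2r 2
      _ = 4 * r ^ 2 := by ring
      _ ≤ r * r ^ 2 := Nat.mul_le_mul_right _ (by omega)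
      _ = r ^ 3 := by ring
      _ ≤ Wprod p := this
    · -- r = 7, so p = 11
      have hr7' : r = 7 := by
        rcases Nat.lt_or_ge r 8 with h | h
        · omega
        · exfalso
          have : r = 8 ∨ r = 9 ∨ r = 10 := by omega
          rcases this with rfl | rfl | rfl <;> revert hrprime <;> decide
      have hp11' : p = 11 := by
        by_contra h
        have h11p : 11 < p := by omega
        have := hmax 11 (by norm_num) h11p
        omega
      subst hp11'
      decide
lemma exists_composite_coprime (m : ℕ) (hm : 31 ≤ m) :
    ∃ c, 2 ≤ c ∧ c ≤ m ∧ Nat.gcd c m = 1 ∧ ¬ c.Prime := by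
  have hm0 : 0 < m := by omega
  -- there is a prime not dividing m
  have hex : ∃ p, p.Prime ∧ ¬ p ∣ m := by
    obtain ⟨p, hpm, hp⟩ := Nat.exists_infinite_primes (m + 1)
    exact ⟨p, hp, fun h => by have := Nat.le_of_dvd hm0 h; omega⟩
  classical
  obtain ⟨p, hpdef⟩ : ∃ p, p = Nat.find hex := ⟨_, rfl⟩
  obtain ⟨hpprime, hpnd⟩ : p.Prime ∧ ¬ p ∣ m := hpdef ▸ Nat.find_spec hex
  have hmin : ∀ q, q < p → q.Prime → q ∣ m := by
    intro q hq hqp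
    by_contra h
    have : p ≤ q := hpdef ▸ Nat.find_le ⟨hqp, h⟩
    omega
  have hp2 : 2 ≤ p := hpprime.two_le
  have hcop : Nat.Coprime (p ^ 2) m :=
    Nat.Coprime.pow_left 2 ((Nat.Prime.coprime_iff_not_dvd hpprime).2 hpnd)
  have hnp : ¬ (p ^ 2).Prime := by
    intro h
    have hdvd : p ∣ p ^ 2 := dvd_pow_self p (by norm_num)
    rcases (Nat.Prime.eq_one_or_self_of_dvd h p hdvd) with h1 | h2
    · omega
    · nlinarith
  refine ⟨p ^ 2, by nlinarith, ?_, hcop, hnp⟩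
  -- p ^ 2 ≤ m
  rcases lt_trichotomy p 7 with h7 | h7 | h7
  · -- p ≤ 5
    have hne6 : p ≠ 6 := by rintro rfl; revert hpprime; decide
    have : p ≤ 5 := by omega
    nlinarith
  · -- p = 7 : 30 ∣ m, m ≥ 31 so m ≥ 60 ≥ 49
    subst h7
    have h2 : 2 ∣ m := hmin 2 (by norm_num) (by norm_num)
    have h3 : 3 ∣ m := hmin 3 (by norm_num) (by norm_num)
    have h5 : 5 ∣ m := hmin 5 (by norm_num) (by norm_num)
    have h6 : 6 ∣ m := (Nat.Coprime.mul_dvd_of_dvd_of_dvd (by norm_num) h2 h3)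
    have h30 : 30 ∣ m := (Nat.Coprime.mul_dvd_of_dvd_of_dvd (by norm_num : Nat.Coprime 6 5) h6 h5)
    obtain ⟨k, rfl⟩ := h30
    have : 2 ≤ k := by omega
    nlinarith
  · -- p ≥ 11 (p prime > 7 means p ≥ 11)
    have hp11 : 11 ≤ p := by
      rcases Nat.lt_or_ge p 11 with h | h
      · exfalso
        have : p = 8 ∨ p = 9 ∨ p = 10 := by omega
        rcases this with rfl | rfl | rfl <;> revert hpprime <;> decide
      · exact h
    have hW : Wprod p ∣ m := by
      apply Finset.prod_primes_dvd
      · intro q hq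
        exact (Nat.Prime.prime (Finset.mem_filter.1 hq).2)
      · intro q hq
        obtain ⟨hq1, hq2⟩ := Finset.mem_filter.1 hq
        exact hmin q (Finset.mem_range.1 hq1) hq2
    calc p ^ 2 ≤ Wprod p := bonse p hpprime hp11
    _ ≤ m := Nat.le_of_dvd hm0 hW

theorem stmt7 (m : ℕ) (hm : 31 ≤ m) : 1 < phiT m := by
  obtain ⟨c, hc2, hcm, hgcd, hnp⟩ := exists_composite_coprime m hm
  rw [phiT, Finset.one_lt_card]
  refine ⟨1, ?_, c, ?_, by omega⟩
  · simp only [Finset.mem_filter, Finset.mem_Icc]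
    exact ⟨⟨le_refl 1, by omega⟩, Nat.gcd_one_left m, Nat.not_prime_one⟩
  · simp only [Finset.mem_filter, Finset.mem_Icc]
    exact ⟨⟨by omega, hcm⟩, hgcd, hnp⟩
end

section
/- φ̃ tends to infinity: for every n ∈ ℕ there exists N ∈ ℕ such that φ̃(m) > n for all m > N. -/
/-!
Let `p` be the least prime not dividing `m`. Every prime below `p` divides `m`, so `(p - 1)# ∣ m`.
Bertrand's postulate gives `(x + 1) * x# ≤ (2x)#`, hence `(x + 1) ^ k ≤ 2 ^ (k ^ 2) * x#`: the
primorial outgrows every power, so `p ^ (2n) ≤ m` as soon as `m ≥ 2 ^ (16 n ^ 2)`. Then the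
`n + 1` numbers `1, p ^ 2, …, p ^ (2n)` are non-prime, coprime to `m` and at most `m`.
-/

theorem succ_mul_primorial_le_primorial_two_mul (x : ℕ) :
    (x + 1) * primorial x ≤ primorial (2 * x) := by
  rcases Nat.eq_zero_or_pos x with rfl | hx
  · simp
  obtain ⟨q, hq, hxq, hqx⟩ := Nat.exists_prime_lt_and_le_two_mul x hx.ne'
  have hq_notMem : q ∉ Nat.primesLE x := fun h => (Nat.mem_primesLE.mp h).1.not_gt hxq
  have hsub : insert q (Nat.primesLE x) ⊆ Nat.primesLE (2 * x) := by
    intro r hr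
    rcases Finset.mem_insert.mp hr with rfl | hr
    · exact Nat.mem_primesLE.mpr ⟨hqx, hq⟩
    · exact Nat.primesLE_mono (by omega) hr
  calc (x + 1) * primorial x ≤ q * primorial x := Nat.mul_le_mul_right _ hxq
    _ = ∏ r ∈ insert q (Nat.primesLE x), r := by
      rw [Finset.prod_insert hq_notMem, primorial_eq_prod_primesLE]
    _ ≤ primorial (2 * x) :=
      Nat.le_of_dvd (primorial_pos _) (Finset.prod_dvd_prod_of_subset _ _ _ hsub)

theorem succ_pow_le_two_pow_sq_mul_primorial (k x : ℕ) :
    (x + 1) ^ k ≤ 2 ^ (k ^ 2) * primorial x := by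
  induction k generalizing x with
  | zero => simpa using Nat.one_le_iff_ne_zero.mpr (primorial_ne_zero x)
  | succ k ih =>
    set y := x / 2
    calc (x + 1) ^ (k + 1) ≤ (2 * (y + 1)) ^ (k + 1) := Nat.pow_le_pow_left (by omega) _
      _ = 2 ^ (k + 1) * ((y + 1) ^ k * (y + 1)) := by rw [mul_pow, pow_succ (y + 1)]
      _ ≤ 2 ^ (k + 1) * (2 ^ (k ^ 2) * primorial y * (y + 1)) := by gcongr; exact ih y
      _ = 2 ^ (k ^ 2 + k + 1) * ((y + 1) * primorial y) := by ring
      _ ≤ 2 ^ ((k + 1) ^ 2) * primorial x := by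
        gcongr
        · norm_num
        · nlinarith
        · exact (succ_mul_primorial_le_primorial_two_mul y).trans
            (primorial_mono (by omega))

theorem succ_pow_le_of_primorial_dvd {k x m : ℕ} (hdvd : primorial x ∣ m)
    (hm : 2 ^ (4 * k ^ 2) ≤ m) : (x + 1) ^ k ≤ m := by
  have hm0 : 0 < m := lt_of_lt_of_le (by positivity) hm
  have hprim : primorial x ≤ m := Nat.le_of_dvd hm0 hdvd
  rcases lt_or_ge (x + 1) (2 ^ (4 * k)) with hx | hx
  · calc (x + 1) ^ k ≤ (2 ^ (4 * k)) ^ k := Nat.pow_le_pow_left hx.le _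
      _ = 2 ^ (4 * k ^ 2) := by ring
      _ ≤ m := hm
  · have key : (x + 1) ^ k * (x + 1) ^ k ≤ (x + 1) ^ k * m :=
      calc (x + 1) ^ k * (x + 1) ^ k = (x + 1) ^ (2 * k) := by ring
        _ ≤ 2 ^ ((2 * k) ^ 2) * primorial x := succ_pow_le_two_pow_sq_mul_primorial _ _
        _ = (2 ^ (4 * k)) ^ k * primorial x := by ring
        _ ≤ (x + 1) ^ k * m := by gcongr
    exact Nat.le_of_mul_le_mul_left key (by positivity)

theorem primorial_dvd_of_forall_prime_le_dvd {x m : ℕ}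
    (h : ∀ q, q.Prime → q ≤ x → q ∣ m) : primorial x ∣ m := by
  rw [primorial_eq_prod_primesLE]
  refine Finset.prod_primes_dvd m (fun q hq => ?_) (fun q hq => ?_) <;>
    obtain ⟨hqx, hq⟩ := Nat.mem_primesLE.mp hq
  exacts [hq.prime, h q hq hqx]

theorem exists_least_prime_not_dvd {m : ℕ} (hm : m ≠ 0) :
    ∃ p, p.Prime ∧ ¬ p ∣ m ∧ ∀ q < p, q.Prime → q ∣ m := by
  classical
  have hex : ∃ p, p.Prime ∧ ¬ p ∣ m := by
    obtain ⟨p, hmp, hp⟩ := Nat.exists_infinite_primes (m + 1)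
    exact ⟨p, hp, fun h => by have := Nat.le_of_dvd (Nat.pos_of_ne_zero hm) h; omega⟩
  exact ⟨Nat.find hex, (Nat.find_spec hex).1, (Nat.find_spec hex).2,
    fun q hq hqp => by_contra fun h => Nat.find_min hex hq ⟨hqp, h⟩⟩

theorem succ_le_phiT_of_prime_not_dvd {p m n : ℕ} (hp : p.Prime) (hpm : ¬ p ∣ m)
    (hle : p ^ (2 * n) ≤ m) : n + 1 ≤ phiT m := by
  have hcop : Nat.Coprime p m := (Nat.Prime.coprime_iff_not_dvd hp).mpr hpm
  calc n + 1 = (Finset.range (n + 1)).card := (Finset.card_range _).symm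
    _ ≤ phiT m := by
      refine Finset.card_le_card_of_injOn (fun i => p ^ (2 * i)) (fun i hi => ?_)
        (fun i _ j _ hij => by simpa using Nat.pow_right_injective hp.two_le hij)
      have hi : i ≤ n := Nat.lt_succ_iff.mp (Finset.mem_range.mp hi)
      simp only [Finset.coe_filter, Finset.mem_Icc, Set.mem_ofPred_eq]
      refine ⟨⟨Nat.one_le_pow _ _ hp.pos, ?_⟩, hcop.pow_left _, fun h => ?_⟩
      · exact (Nat.pow_le_pow_right hp.pos (by omega)).trans hle
      · have := h.eq_one_of_pow; omega

theorem stmt8 (n : ℕ) : ∃ N : ℕ, ∀ m > N, phiT m > n := by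
  refine ⟨2 ^ (4 * (2 * n) ^ 2), fun m hm => ?_⟩
  obtain ⟨p, hp, hpm, hmin⟩ := exists_least_prime_not_dvd (Nat.ne_zero_of_lt hm)
  have hdvd : primorial (p - 1) ∣ m :=
    primorial_dvd_of_forall_prime_le_dvd fun q hq hqp => hmin q (by have := hq.pos; omega) hq
  have hpow : p ^ (2 * n) ≤ m := by
    simpa [Nat.sub_add_cancel hp.one_le] using succ_pow_le_of_primorial_dvd hdvd hm.le
  exact succ_le_phiT_of_prime_not_dvd hp hpm hpow
end

section
/- For fixed a, b ∈ ℕ, the set A(a,b) = {n ∈ ℕ : φ̃(n) = a and ω(n) = b} is finite. -/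
/-!
Every prime `p ≤ √n` either divides `n`, and is then counted by `ω(n)`, or is coprime to `n`,
and then `p²` is a non-prime unit modulo `n` in `[1, n]`, counted by `φ̃(n)`.
Hence `π(√n) ≤ φ̃(n) + ω(n)`, and since `π(√n) → ∞`, only finitely many `n` have
`φ̃(n) + ω(n)` bounded.
-/

open Finset Filter

namespace Nat

lemma card_primesLE_sqrt_filter_not_dvd_le_phiT (n : ℕ) :
    #{p ∈ primesLE (sqrt n) | ¬ p ∣ n} ≤ phiT n := by
  refine card_le_card_of_injOn (fun p : ℕ => p ^ 2) (fun p hmem => ?_) (fun _ _ _ _ h => ?_)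
  · obtain ⟨hpLE, hpn⟩ := mem_filter.1 hmem
    have hp : p.Prime := prime_of_mem_primesLE hpLE
    refine mem_filter.2 ⟨mem_Icc.2 ⟨?_, ?_⟩, ?_, ?_⟩
    · exact one_le_pow _ _ hp.pos
    · exact le_sqrt'.1 (le_of_mem_primesLE hpLE)
    · exact ((hp.coprime_iff_not_dvd).2 hpn).pow_left 2
    · exact Prime.not_prime_pow le_rfl
  · exact Nat.pow_left_injective two_ne_zero h

lemma card_primesLE_filter_dvd_le_card_primeFactors {n : ℕ} (hn : n ≠ 0) (m : ℕ) :
    #{p ∈ primesLE m | p ∣ n} ≤ #n.primeFactors :=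
  card_le_card fun _ hp =>
    mem_primeFactors.2 ⟨prime_of_mem_primesLE (mem_filter.1 hp).1, (mem_filter.1 hp).2, hn⟩

theorem primeCounting_sqrt_le_phiT_add_card_primeFactors (n : ℕ) :
    primeCounting (sqrt n) ≤ phiT n + #n.primeFactors := by
  rcases eq_or_ne n 0 with rfl | hn
  · simp
  rw [← primesLE_card_eq_primeCounting, ← card_filter_add_card_filter_not (· ∣ n), add_comm]
  exact add_le_add (card_primesLE_sqrt_filter_not_dvd_le_phiT n)
    (card_primesLE_filter_dvd_le_card_primeFactors hn _)

lemma tendsto_sqrt_atTop : Tendsto sqrt atTop atTop :=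
  tendsto_atTop_atTop.2 fun b => ⟨b * b, fun _ => le_sqrt.2⟩

end Nat

theorem stmt11 (a b : ℕ) :
    {n : ℕ | phiT n = a ∧ n.primeFactors.card = b}.Finite := by
  have hlarge : ∀ᶠ n in cofinite, a + b < Nat.primeCounting (Nat.sqrt n) := by
    rw [Nat.cofinite_eq_atTop]
    exact (Nat.tendsto_primeCounting.comp Nat.tendsto_sqrt_atTop).eventually_gt_atTop _
  refine (eventually_cofinite.1 hlarge).subset fun n ⟨hphi, homega⟩ => ?_
  have := Nat.primeCounting_sqrt_le_phiT_add_card_primeFactors n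
  simp only [Set.mem_ofPred_eq, not_lt]
  omega
end

section
/- Let ℓ, b ∈ ℕ with a < ℓ(ℓ+1)/2, let p be the (b+ℓ)-th prime, and let n be a natural number with ω(n) = b and n > p². Then φ̃(n) > a. -/
open Finset

theorem Nat.sym2_eq_of_prime_mul_eq {p q r t : ℕ} (hp : p.Prime) (hq : q.Prime) (hr : r.Prime)
    (h : p * q = r * t) : s(p, q) = s(r, t) := by
  rcases (Nat.Prime.dvd_mul hr).1 ⟨t, h⟩ with hrp | hrq
  · obtain rfl := (Nat.prime_dvd_prime_iff_eq hr hp).1 hrp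
    rw [Nat.eq_of_mul_eq_mul_left hr.pos h]
  · obtain rfl := (Nat.prime_dvd_prime_iff_eq hr hq).1 hrq
    have hpt : p = t := Nat.eq_of_mul_eq_mul_left hr.pos (by rw [mul_comm, h])
    rw [hpt, Sym2.eq_swap]

theorem card_le_card_filter_not_dvd_add_card_primeFactors {P : Finset ℕ} {n : ℕ}
    (hP : ∀ q ∈ P, q.Prime) (hn : n ≠ 0) :
    #P ≤ #(P.filter (¬ · ∣ n)) + #n.primeFactors := by
  have hdvd : P.filter (· ∣ n) ⊆ n.primeFactors := fun q hq => by
    rw [mem_filter] at hq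
    exact Nat.mem_primeFactors.2 ⟨hP q hq.1, hq.2, hn⟩
  have := card_filter_add_card_filter_not (s := P) (· ∣ n)
  have := card_le_card hdvd
  omega

theorem card_sym2_le_phiT {S : Finset ℕ} {n m : ℕ} (hS : ∀ q ∈ S, q.Prime ∧ ¬ q ∣ n)
    (hle : ∀ q ∈ S, q ≤ m) (hm : m ^ 2 ≤ n) : #S.sym2 ≤ phiT n := by
  let mul : Sym2 ℕ → ℕ := Sym2.lift ⟨(· * ·), mul_comm⟩
  refine card_le_card_of_injOn mul ?_ ?_
  · intro z hz
    induction z using Sym2.ind with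
    | h q r =>
      obtain ⟨hqS, hrS⟩ := mk_mem_sym2_iff.1 hz
      obtain ⟨hq, hqn⟩ := hS q hqS
      obtain ⟨hr, hrn⟩ := hS r hrS
      have hqr : q * r ≤ n := (Nat.mul_le_mul (hle q hqS) (hle r hrS)).trans (sq m ▸ hm)
      simp only [mul, Sym2.lift_mk, coe_filter, Set.mem_ofPred_eq, mem_Icc]
      exact ⟨⟨Nat.mul_pos hq.pos hr.pos, hqr⟩,
        Nat.Coprime.mul_left ((hq.coprime_iff_not_dvd).2 hqn) ((hr.coprime_iff_not_dvd).2 hrn),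
        Nat.not_prime_mul hq.ne_one hr.ne_one⟩
  · intro z hz w hw hzw
    induction z using Sym2.ind with
    | h q r =>
      induction w using Sym2.ind with
      | h q' r' =>
        obtain ⟨hqS, hrS⟩ := mk_mem_sym2_iff.1 hz
        obtain ⟨hq'S, -⟩ := mk_mem_sym2_iff.1 hw
        exact Nat.sym2_eq_of_prime_mul_eq (hS q hqS).1 (hS r hrS).1 (hS q' hq'S).1 hzw

theorem stmt12 (a l b n : ℕ) (ha : a < l * (l + 1) / 2)
    (hω : n.primeFactors.card = b)
    (hn : n > (Nat.nth Nat.Prime (b + l - 1)) ^ 2) : phiT n > a := by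
  set p := Nat.nth Nat.Prime (b + l - 1)
  have hn0 : n ≠ 0 := by omega
  set P := (range (b + l)).image (Nat.nth Nat.Prime)
  have hP : #P = b + l := by
    rw [card_image_of_injective _ (Nat.nth_injective Nat.infinite_setOfPred_prime), card_range]
  have hPprime : ∀ q ∈ P, q.Prime := by
    simp only [P, mem_image]
    rintro _ ⟨i, -, rfl⟩
    exact Nat.prime_nth_prime i
  have hPle : ∀ q ∈ P, q ≤ p := by
    simp only [P, mem_image, mem_range]
    rintro _ ⟨i, hi, rfl⟩
    exact Nat.nth_monotone Nat.infinite_setOfPred_prime (by omega)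
  have hS := card_le_card_filter_not_dvd_add_card_primeFactors hPprime hn0
  set S := P.filter (¬ · ∣ n)
  calc a < (l + 1).choose 2 := by rwa [Nat.choose_two_right, Nat.add_sub_cancel, mul_comm]
    _ ≤ (#S + 1).choose 2 := Nat.choose_le_choose 2 (by omega)
    _ = #S.sym2 := (card_sym2 S).symm
    _ ≤ phiT n :=
      card_sym2_le_phiT (fun q hq => ⟨hPprime q (mem_filter.1 hq).1, (mem_filter.1 hq).2⟩)
        (fun q hq => hPle q (mem_filter.1 hq).1) hn.le
end

section
/- There is no positive integer n with φ̃(n) = 13. -/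
open Finset Nat

theorem pow_six_le_prod_primesBelow {P : ℕ} (hP : 31 ≤ P) : P ^ 6 ≤ ∏ p ∈ P.primesBelow, p := by
  induction P using Nat.strong_induction_on with
  | _ P ih =>
    rcases lt_or_ge P 128 with hsmall | hlarge
    · clear ih; revert P; decide +kernel
    obtain ⟨Q, hQ, hQlo, hQhi⟩ := exists_prime_lt_and_le_two_mul ((P - 1) / 2) (by omega)
    have hQ7 : Q ^ 7 ≤ ∏ p ∈ P.primesBelow, p :=
      calc Q ^ 7 = Q * Q ^ 6 := by ring
        _ ≤ Q * ∏ p ∈ Q.primesBelow, p := Nat.mul_le_mul_left _ (ih Q (by omega) (by omega))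
        _ = ∏ p ∈ (Q + 1).primesBelow, p := by
          rw [primesBelow_succ, if_pos hQ, prod_insert (notMem_primesBelow Q)]
        _ ≤ ∏ p ∈ P.primesBelow, p :=
          prod_le_prod_of_subset_of_one_le' (primesBelow_mono (by omega))
            fun p hp _ => (prime_of_mem_primesBelow hp).one_le
    have hP7 : 128 * P ^ 6 ≤ 128 * Q ^ 7 :=
      calc 128 * P ^ 6 ≤ P * P ^ 6 := Nat.mul_le_mul_right _ hlarge
        _ = P ^ 7 := by ring
        _ ≤ (2 * Q) ^ 7 := Nat.pow_le_pow_left (by omega) 7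
        _ = 128 * Q ^ 7 := by ring
    omega

theorem prod_primesBelow_le_prod_filter_not_dvd_mul {n : ℕ} (hn : n ≠ 0) (P : ℕ) :
    ∏ p ∈ P.primesBelow, p ≤ (∏ p ∈ P.primesBelow with ¬ p ∣ n, p) * n := by
  rw [← prod_filter_not_mul_prod_filter _ (· ∣ n)]
  refine Nat.mul_le_mul_left _ (Nat.le_of_dvd (Nat.pos_of_ne_zero hn) ?_)
  exact prod_primes_dvd n (fun p hp => (prime_of_mem_primesBelow (mem_filter.mp hp).1).prime)
    fun p hp => (mem_filter.mp hp).2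

theorem Nat.Prime.minFac_mul {p q : ℕ} (hp : p.Prime) (hq : q.Prime) (hpq : p ≤ q) :
    (p * q).minFac = p := by
  have hle : (p * q).minFac ≤ p := minFac_le_of_dvd hp.two_le (dvd_mul_right p q)
  have hprime : (p * q).minFac.Prime := minFac_prime (one_lt_mul hp.one_le hq.one_lt).ne'
  rcases (hprime.dvd_mul.mp (minFac_dvd _)) with h | h
  · exact (prime_dvd_prime_iff_eq hprime hp).mp h
  · have := (prime_dvd_prime_iff_eq hprime hq).mp h
    omega

theorem Nat.Prime.eq_of_mul_eq_mul {a b c d : ℕ} (ha : a.Prime) (hb : b.Prime) (hc : c.Prime)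
    (hd : d.Prime) (hab : a ≤ b) (hcd : c ≤ d) (h : a * b = c * d) : a = c ∧ b = d := by
  have hac : a = c := by rw [← ha.minFac_mul hb hab, ← hc.minFac_mul hd hcd, h]
  subst hac
  exact ⟨rfl, Nat.eq_of_mul_eq_mul_left ha.pos h⟩

noncomputable def nthPrimeNotDvd (n k : ℕ) : ℕ := nth (fun p => p.Prime ∧ ¬ p ∣ n) k

section nthPrimeNotDvd

variable {n : ℕ}

theorem infinite_setOf_prime_not_dvd (hn : n ≠ 0) : {p | p.Prime ∧ ¬ p ∣ n}.Infinite := by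
  have hdvd : {p | p ∣ n}.Finite := (Set.finite_Iic n).subset
    fun _ hp => Set.mem_Iic.mpr (Nat.le_of_dvd (Nat.pos_of_ne_zero hn) hp)
  exact infinite_setOfPred_prime.sdiff hdvd

theorem nthPrimeNotDvd_spec (hn : n ≠ 0) (k : ℕ) :
    (nthPrimeNotDvd n k).Prime ∧ ¬ nthPrimeNotDvd n k ∣ n :=
  nth_mem_of_infinite (infinite_setOf_prime_not_dvd hn) k

theorem nthPrimeNotDvd_strictMono (hn : n ≠ 0) : StrictMono (nthPrimeNotDvd n) :=
  nth_strictMono (infinite_setOf_prime_not_dvd hn)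

theorem filter_primesBelow_nthPrimeNotDvd (hn : n ≠ 0) (k : ℕ) :
    {p ∈ (nthPrimeNotDvd n k).primesBelow | ¬ p ∣ n} = (range k).image (nthPrimeNotDvd n) := by
  have hmono := nthPrimeNotDvd_strictMono hn
  ext p
  simp only [mem_filter, mem_primesBelow, mem_image, mem_range]
  constructor
  · rintro ⟨⟨hlt, hp⟩, hdvd⟩
    have hcount : nthPrimeNotDvd n (count _ p) = p :=
      nth_count (p := fun p => p.Prime ∧ ¬ p ∣ n) ⟨hp, hdvd⟩
    rw [← hcount] at hlt
    exact ⟨_, hmono.lt_iff_lt.mp hlt, hcount⟩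
  · rintro ⟨i, hi, rfl⟩
    exact ⟨⟨hmono hi, (nthPrimeNotDvd_spec hn i).1⟩, (nthPrimeNotDvd_spec hn i).2⟩

theorem prod_primesBelow_nthPrimeNotDvd_le (hn : n ≠ 0) {k B : ℕ}
    (hB : ∀ i < k, nthPrimeNotDvd n i ≤ B) :
    ∏ p ∈ (nthPrimeNotDvd n k).primesBelow, p ≤ B ^ k * n :=
  calc ∏ p ∈ (nthPrimeNotDvd n k).primesBelow, p
      ≤ (∏ p ∈ (range k).image (nthPrimeNotDvd n), p) * n := by
        rw [← filter_primesBelow_nthPrimeNotDvd hn]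
        exact prod_primesBelow_le_prod_filter_not_dvd_mul hn _
    _ = (∏ i ∈ range k, nthPrimeNotDvd n i) * n := by
        rw [prod_image (nthPrimeNotDvd_strictMono hn).injective.injOn]
    _ ≤ B ^ k * n := by
        gcongr
        simpa using prod_le_pow_card (range k) _ B fun i hi => hB i (mem_range.mp hi)

theorem sq_nthPrimeNotDvd_four_le (hn : n ≠ 0) (h31 : 31 ≤ nthPrimeNotDvd n 4) :
    nthPrimeNotDvd n 4 ^ 2 ≤ n := by
  set q := nthPrimeNotDvd n
  have hprod : ∏ p ∈ (q 4).primesBelow, p ≤ q 4 ^ 4 * n :=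
    prod_primesBelow_nthPrimeNotDvd_le hn fun i hi => (nthPrimeNotDvd_strictMono hn hi).le
  have h6 : q 4 ^ 4 * q 4 ^ 2 ≤ q 4 ^ 4 * n :=
    calc q 4 ^ 4 * q 4 ^ 2 = q 4 ^ 6 := by ring
      _ ≤ _ := pow_six_le_prod_primesBelow h31
      _ ≤ _ := hprod
  exact Nat.le_of_mul_le_mul_left h6 (by positivity)

theorem nthPrimeNotDvd_mul_le (hn : 391 ≤ n) :
    nthPrimeNotDvd n 3 * nthPrimeNotDvd n 3 ≤ n ∧ nthPrimeNotDvd n 2 * nthPrimeNotDvd n 4 ≤ n := by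
  set q := nthPrimeNotDvd n
  have hn0 : n ≠ 0 := by omega
  have hprime := fun i => (nthPrimeNotDvd_spec hn0 i).1
  have h23 : q 2 < q 3 := nthPrimeNotDvd_strictMono hn0 (by norm_num)
  have h34 : q 3 < q 4 := nthPrimeNotDvd_strictMono hn0 (by norm_num)
  obtain h4 | h4 | h4 : 31 ≤ q 4 ∨ q 4 = 29 ∨ q 4 ≤ 23 := by
    by_contra! h
    exact absurd ((by decide : ∀ p < 31, p.Prime → p = 29 ∨ p ≤ 23) _ h.1 (hprime 4)) (by omega)
  · have := sq_nthPrimeNotDvd_four_le hn0 h4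
    constructor <;> nlinarith
  · have hq3 : q 3 ≤ 23 := (by decide : ∀ p < 29, p.Prime → p ≤ 23) _ (by omega) (hprime 3)
    have hq2 : q 2 ≤ 19 := (by decide : ∀ p < 23, p.Prime → p ≤ 19) _ (by omega) (hprime 2)
    have hprod : ∏ p ∈ (q 4).primesBelow, p ≤ 23 ^ 4 * n :=
      prod_primesBelow_nthPrimeNotDvd_le hn0 fun i hi =>
        ((nthPrimeNotDvd_strictMono hn0).monotone (by omega : i ≤ 3)).trans hq3
    rw [h4, (by decide : ∏ p ∈ primesBelow 29, p = 223092870)] at hprod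
    constructor <;> nlinarith
  · have hq3 : q 3 ≤ 19 := (by decide : ∀ p < 23, p.Prime → p ≤ 19) _ (by omega) (hprime 3)
    have hq2 : q 2 ≤ 17 := (by decide : ∀ p < 19, p.Prime → p ≤ 17) _ (by omega) (hprime 2)
    constructor <;> nlinarith

theorem fourteen_le_phiT_of_nthPrimeNotDvd_mul_le (hn : n ≠ 0)
    (h33 : nthPrimeNotDvd n 3 * nthPrimeNotDvd n 3 ≤ n)
    (h24 : nthPrimeNotDvd n 2 * nthPrimeNotDvd n 4 ≤ n) : 14 ≤ phiT n := by
  set q := nthPrimeNotDvd n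
  have hq := nthPrimeNotDvd_spec hn
  have hmono := (nthPrimeNotDvd_strictMono hn).monotone
  set pairs := (range 5 ×ˢ range 5).filter fun ij : ℕ × ℕ => ij.1 ≤ ij.2 ∧ (ij.2 ≤ 3 ∨ ij.1 ≤ 2)
  have hcard : pairs.card = 13 := by decide
  set f : ℕ × ℕ → ℕ := fun ij => q ij.1 * q ij.2
  have hinj : Set.InjOn f pairs := by
    intro ij hij kl hkl h
    obtain ⟨hi, hk⟩ := Nat.Prime.eq_of_mul_eq_mul (hq _).1 (hq _).1 (hq _).1 (hq _).1
      (hmono (mem_filter.mp hij).2.1) (hmono (mem_filter.mp hkl).2.1) h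
    exact Prod.ext ((nthPrimeNotDvd_strictMono hn).injective hi)
      ((nthPrimeNotDvd_strictMono hn).injective hk)
  have hmem : ∀ ij ∈ pairs, f ij ∈ {m ∈ Icc 1 n | m.gcd n = 1 ∧ ¬ m.Prime} := by
    rintro ⟨i, j⟩ hij
    simp only [pairs, mem_filter, mem_product, mem_range] at hij
    have hle : q i * q j ≤ n := by
      rcases hij.2.2 with hj | hi
      · exact (Nat.mul_le_mul (hmono (by omega)) (hmono hj)).trans h33
      · exact (Nat.mul_le_mul (hmono hi) (hmono (by omega))).trans h24
    simp only [mem_filter, mem_Icc]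
    refine ⟨⟨Nat.mul_pos (hq i).1.pos (hq j).1.pos, hle⟩, ?_,
      not_prime_mul (hq i).1.ne_one (hq j).1.ne_one⟩
    exact Nat.Coprime.mul_left ((hq i).1.coprime_iff_not_dvd.mpr (hq i).2)
      ((hq j).1.coprime_iff_not_dvd.mpr (hq j).2)
  have hone : 1 ∉ pairs.image f := by
    simp only [mem_image, not_exists, not_and]
    exact fun ij _ h => (hq ij.1).1.ne_one (Nat.eq_one_of_mul_eq_one_right h)
  calc 14 = (insert 1 (pairs.image f)).card := by
        rw [card_insert_of_notMem hone, Finset.card_image_of_injOn hinj, hcard]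
    _ ≤ phiT n := by
        refine card_le_card (insert_subset ?_ (image_subset_iff.mpr hmem))
        simp [hn, Nat.one_le_iff_ne_zero, Nat.not_prime_one]

end nthPrimeNotDvd

-- The `minFac` test of primality evaluates far faster in the kernel than the default instance.
theorem phiT_eq_card_filter_minFac (n : ℕ) :
    phiT n = ((Icc 1 n).filter (fun m => m.gcd n = 1 ∧ ¬ (2 ≤ m ∧ m.minFac = m))).card := by
  simp only [phiT, prime_def_minFac]

theorem phiT_ne_thirteen_of_lt : ∀ n < 391, phiT n ≠ 13 := by
  simp only [phiT_eq_card_filter_minFac]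
  decide +kernel

theorem stmt13 : ¬ ∃ n : ℕ, 0 < n ∧ phiT n = 13 := by
  rintro ⟨n, -, h13⟩
  rcases lt_or_ge n 391 with hsmall | hlarge
  · exact phiT_ne_thirteen_of_lt n hsmall h13
  · obtain ⟨h33, h24⟩ := nthPrimeNotDvd_mul_le hlarge
    have h14 := fourteen_le_phiT_of_nthPrimeNotDvd_mul_le (by omega) h33 h24
    omega
end

section
/- φ̃(n) = 2 if and only if n ∈ {5, 10, 14, 20, 42, 60}. -/
open Finset

lemma mul_primorial_dvd_primorial {p k m : ℕ} (hp : p.Prime) (hkp : k < p) (hpm : p ≤ m) :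
    p * primorial k ∣ primorial m := by
  have hp_notMem : p ∉ (range (k + 1)).filter Nat.Prime := fun h => by
    have := mem_range.mp (mem_filter.mp h).1
    omega
  rw [primorial, ← prod_insert (f := fun x => x) hp_notMem]
  refine prod_dvd_prod_of_subset _ _ _ (insert_subset_iff.mpr ⟨?_, ?_⟩)
  · exact mem_filter.mpr ⟨mem_range.mpr (by omega), hp⟩
  · exact filter_subset_filter _ (range_subset_range.mpr (by omega))

lemma succ_pow_three_le_primorial {m : ℕ} (hm : 12 ≤ m) : (m + 1) ^ 3 ≤ primorial m := by
  induction m using Nat.strong_induction_on with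
  | _ m ih =>
  by_cases hm24 : m < 24
  · rcases hm.eq_or_lt with rfl | hm13
    · decide
    · calc (m + 1) ^ 3 ≤ 24 ^ 3 := Nat.pow_le_pow_left (by omega) 3
        _ ≤ primorial 13 := by decide
        _ ≤ primorial m := primorial_mono hm13
  · obtain ⟨p, hp, hkp, hpm⟩ := Nat.exists_prime_lt_and_le_two_mul (m / 2) (by omega)
    have hp8 : 8 ≤ p := by omega
    calc (m + 1) ^ 3 ≤ (2 * (m / 2 + 1)) ^ 3 := Nat.pow_le_pow_left (by omega) 3
      _ = 8 * (m / 2 + 1) ^ 3 := by ring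
      _ ≤ p * primorial (m / 2) := Nat.mul_le_mul hp8 (ih _ (by omega) (by omega))
      _ ≤ primorial m :=
          Nat.le_of_dvd (primorial_pos m) (mul_primorial_dvd_primorial hp hkp (by omega))

lemma primorial_dvd_of_forall_prime_dvd {m n : ℕ} (h : ∀ r, r.Prime → r ≤ m → r ∣ n) :
    primorial m ∣ n :=
  prod_primes_dvd _ (fun r hr => (mem_filter.mp hr).2.prime) fun r hr => by
    obtain ⟨hrm, hr⟩ := mem_filter.mp hr
    exact h r hr (by simpa [Nat.lt_succ_iff] using hrm)

lemma three_le_phiT {n a b : ℕ} (ha : 1 < a) (hab : a < b) (hbn : b ≤ n)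
    (ha_cop : a.Coprime n) (hb_cop : b.Coprime n) (ha_prime : ¬ a.Prime) (hb_prime : ¬ b.Prime) :
    3 ≤ phiT n := by
  have hsub : ({1, a, b} : Finset ℕ) ⊆ (Icc 1 n).filter (fun m => m.gcd n = 1 ∧ ¬ m.Prime) := by
    intro m hm
    simp only [mem_insert, mem_singleton] at hm
    rcases hm with rfl | rfl | rfl
    · exact mem_filter.mpr ⟨mem_Icc.mpr ⟨le_rfl, by omega⟩, Nat.gcd_one_left n, Nat.not_prime_one⟩
    · exact mem_filter.mpr ⟨mem_Icc.mpr ⟨by omega, by omega⟩, ha_cop, ha_prime⟩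
    · exact mem_filter.mpr ⟨mem_Icc.mpr ⟨by omega, hbn⟩, hb_cop, hb_prime⟩
  have hcard : ({1, a, b} : Finset ℕ).card = 3 :=
    card_eq_three.mpr ⟨1, a, b, by omega, by omega, by omega, rfl⟩
  exact hcard ▸ card_le_card hsub

lemma three_le_phiT_of_primes_not_dvd {n p q : ℕ} (hp : p.Prime) (hq : q.Prime) (hpq : p < q)
    (hpn : ¬ p ∣ n) (hqn : ¬ q ∣ n) (hpqn : p * q ≤ n) : 3 ≤ phiT n := by
  have hp_cop := (Nat.Prime.coprime_iff_not_dvd hp).mpr hpn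
  have hq_cop := (Nat.Prime.coprime_iff_not_dvd hq).mpr hqn
  refine three_le_phiT (a := p ^ 2) (b := p * q) ?_ ?_ hpqn (hp_cop.pow_left 2)
    (hp_cop.mul_left hq_cop) (Nat.Prime.not_prime_pow le_rfl)
    (Nat.not_prime_mul hp.ne_one hq.ne_one)
  · nlinarith [hp.two_le]
  · rw [sq]; exact Nat.mul_lt_mul_of_pos_left hpq hp.pos

lemma exists_two_least_primes_not_dvd {n : ℕ} (hn : n ≠ 0) :
    ∃ p q, p.Prime ∧ q.Prime ∧ p < q ∧ ¬ p ∣ n ∧ ¬ q ∣ n ∧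
      ∀ r, r.Prime → r < q → r ≠ p → r ∣ n := by
  classical
  have hex (m : ℕ) : ∃ r, m < r ∧ r.Prime ∧ ¬ r ∣ n := by
    obtain ⟨r, hr, hr_prime⟩ := Nat.exists_infinite_primes (m + n + 1)
    exact ⟨r, by omega, hr_prime, fun h => by have := Nat.le_of_dvd (by omega) h; omega⟩
  obtain ⟨-, hp, hpn⟩ := Nat.find_spec (hex 0)
  obtain ⟨hpq, hq, hqn⟩ := Nat.find_spec (hex (Nat.find (hex 0)))
  refine ⟨_, _, hp, hq, hpq, hpn, hqn, fun r hr hrq hrp => ?_⟩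
  by_contra hrn
  rcases lt_or_gt_of_ne hrp with h | h
  · exact Nat.find_min (hex 0) h ⟨hr.pos, hr, hrn⟩
  · exact Nat.find_min (hex _) hrq ⟨h, hr, hrn⟩

lemma mul_le_of_forall_prime_lt_dvd {n p q : ℕ} (hn : 60 < n) (hp : p.Prime) (hq : q.Prime)
    (hpq : p < q) (hdvd : ∀ r, r.Prime → r < q → r ≠ p → r ∣ n) : p * q ≤ n := by
  by_cases hq13 : 13 ≤ q
  · have hq3 : q ^ 3 ≤ p * n :=
      calc q ^ 3 = (q - 1 + 1) ^ 3 := by rw [Nat.sub_add_cancel hq.one_le]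
        _ ≤ primorial (q - 1) := succ_pow_three_le_primorial (by omega)
        _ ≤ p * n := Nat.le_of_dvd (Nat.mul_pos hp.pos (by omega)) <|
            primorial_dvd_of_forall_prime_dvd fun r hr hrq => by
              rcases eq_or_ne r p with rfl | hrp
              · exact dvd_mul_right r n
              · exact dvd_mul_of_dvd_right (hdvd r hr (by omega) hrp) p
    have hpq3 : p * (p * q) < q ^ 3 := by
      rw [pow_three]; exact Nat.mul_lt_mul'' hpq (Nat.mul_lt_mul_of_pos_right hpq hq.pos)
    exact (Nat.lt_of_mul_lt_mul_left (hpq3.trans_le hq3)).le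
  · by_cases h711 : p = 7 ∧ q = 11
    · obtain ⟨rfl, rfl⟩ := h711
      have := hdvd 2 Nat.prime_two (by norm_num) (by norm_num)
      have := hdvd 3 Nat.prime_three (by norm_num) (by norm_num)
      have := hdvd 5 Nat.prime_five (by norm_num) (by norm_num)
      omega
    · have hp2 := hp.two_le
      have : p * q ≤ 60 := by
        interval_cases q <;> interval_cases p <;>
          first | omega | exact absurd hp (by decide) | exact absurd hq (by decide)
      omega

lemma three_le_phiT_of_sixty_lt {n : ℕ} (hn : 60 < n) : 3 ≤ phiT n := by
  obtain ⟨p, q, hp, hq, hpq, hpn, hqn, hdvd⟩ :=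
    exists_two_least_primes_not_dvd (n := n) (by omega)
  exact three_le_phiT_of_primes_not_dvd hp hq hpq hpn hqn
    (mul_le_of_forall_prime_lt_dvd hn hp hq hpq hdvd)

theorem stmt15_general (n : ℕ) :
    phiT n = 2 ↔ n ∈ ({5, 10, 14, 20, 42, 60} : Finset ℕ) := by
  rcases le_or_gt n 60 with hn | hn
  · interval_cases n <;> decide
  · have := three_le_phiT_of_sixty_lt hn
    simp only [mem_insert, mem_singleton]
    omega

theorem stmt15 (n : ℕ) (hn : 0 < n) :
    phiT n = 2 ↔ n ∈ ({5, 10, 14, 20, 42, 60} : Finset ℕ) :=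
  stmt15_general n
end
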